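/- Suppose char k ≠ 2 and α = β = 1 (the identity automorphism). Then with Dₙ := dim_k Ker d_{n+1} − dim_k Im dₙ for n > 0, one has D₁ = 2, D₂ = 1, and Dₙ = 0 for n ≥ 3. In other words, the Hochschild cohomology of Λ satisfies dim HH¹(Λ) = 2, dim HH²(Λ) = 1, and HHⁿ(Λ) = 0 for n ≥ 3, showing that Λ gives a negative answer to Happel's question (HH vanishes in high degrees but Λ has infinite global dimension). -/

import Mathlib

/-- The matrix of the differential `dₙ : Λⁿ → Λ^{n+1}` of the complex computing
`HH^*(Λ, ₁Λ_ψ)` for `ψ(x) = αx`, `ψ(y) = βy`, in the standard basis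
`{eᵢ, xeᵢ, yeᵢ, yxeᵢ}` (encoded by `Fin 4` as `0 ↦ eᵢ, 1 ↦ xeᵢ, 2 ↦ yeᵢ, 3 ↦ yxeᵢ`):
`eᵢ^{n−1} ↦ [1+(−1)ⁿqⁱα]xeᵢⁿ + [q^{n−i−1}+(−1)ⁿβ]ye^n_{i+1}`,
`xeᵢ^{n−1} ↦ [q^{n−i−1}+(−1)^{n+1}qβ]yxe^n_{i+1}`,
`yeᵢ^{n−1} ↦ [−q+(−1)ⁿqⁱα]yxeᵢⁿ`, `yxeᵢ^{n−1} ↦ 0`. -/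
def Dmat (k : Type) [Field k] (q α β : k) (n : ℕ) :
    Matrix (Fin (n + 1) × Fin 4) (Fin n × Fin 4) k := fun jb ia =>
  if jb.2 = 1 ∧ ia.2 = 0 ∧ (jb.1 : ℕ) = (ia.1 : ℕ) then
    1 + (-1 : k) ^ n * q ^ (ia.1 : ℕ) * α
  else if jb.2 = 2 ∧ ia.2 = 0 ∧ (jb.1 : ℕ) = (ia.1 : ℕ) + 1 then
    q ^ (n - (ia.1 : ℕ) - 1) + (-1 : k) ^ n * β
  else if jb.2 = 3 ∧ ia.2 = 1 ∧ (jb.1 : ℕ) = (ia.1 : ℕ) + 1 then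
    q ^ (n - (ia.1 : ℕ) - 1) + (-1 : k) ^ (n + 1) * q * β
  else if jb.2 = 3 ∧ ia.2 = 2 ∧ (jb.1 : ℕ) = (ia.1 : ℕ) then
    -q + (-1 : k) ^ n * q ^ (ia.1 : ℕ) * α
  else 0

/-- The differential `dₙ : Λⁿ → Λ^{n+1}` as a `k`-linear map. -/
noncomputable def dMap (k : Type) [Field k] (q α β : k) (n : ℕ) :
    (Fin n × Fin 4 → k) →ₗ[k] (Fin (n + 1) × Fin 4 → k) :=
  (Dmat k q α β n).mulVecLin

/-!
In the basis `{eᵢ, xeᵢ, yeᵢ, yxeᵢ}`, `dₙ` sends the `e`-part to the `x`,`y`-part and the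
`x`,`y`-part to the `yx`-part, and every coefficient has the shape `±qᵃ ± qᵇ`. Since `q` is not a
root of unity and `char k ≠ 2`, such a coefficient vanishes only when it is `qᵃ − qᵃ`; reading
off the vanishing pattern gives `rank d₁ = 2`, `rank d₂ = 4` and `rank dₙ = 2n + 1` for `n ≥ 3`,
each bounded below by pivot entries and above by a family of vectors spanning the columns. Finally
`dim Ker d_{n+1} = 4(n + 1) − rank d_{n+1}`.
-/

open Module Submodule Matrix

namespace Matrix

variable {m n ι K : Type*} [Field K] [Fintype n] [Fintype ι]

theorem card_le_rank_of_pivots [DecidableEq ι] (M : Matrix m n K) (ρ : ι → m) (κ : ι → n)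
    (hdiag : ∀ i, M (ρ i) (κ i) ≠ 0) (hoff : ∀ i j, i ≠ j → M (ρ i) (κ j) = 0) :
    Fintype.card ι ≤ M.rank := by
  classical
  have hsub : M.submatrix ρ κ = diagonal fun i => M (ρ i) (κ i) := by
    ext i j
    by_cases h : i = j
    · subst h; simp
    · simp [h, hoff i j h]
  calc Fintype.card ι = (diagonal fun i => M (ρ i) (κ i)).rank := by
        rw [rank_diagonal]; simp [hdiag]
    _ = (M.submatrix ρ κ).rank := by rw [hsub]
    _ ≤ M.rank := rank_submatrix_le M ρ κ

theorem rank_le_card_of_col_mem_span (M : Matrix m n K) (g : ι → m → K)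
    (hg : ∀ c, M.col c ∈ span K (Set.range g)) : M.rank ≤ Fintype.card ι := by
  have := FiniteDimensional.span_of_finite K (Set.finite_range g)
  rw [rank_eq_finrank_span_cols]
  exact (finrank_mono (span_le.mpr (by rintro _ ⟨c, rfl⟩; exact hg c))).trans
    (finrank_range_le_card g)

end Matrix

section NotRootOfUnity

variable {K : Type*} [Field K] {q : K}

theorem pow_injective_of_pow_ne_one (hq : q ≠ 0) (hq' : ∀ m : ℕ, 0 < m → q ^ m ≠ 1) :
    Function.Injective (q ^ · : ℕ → K) := by
  have hu : ¬IsOfFinOrder (Units.mk0 q hq) := by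
    rw [isOfFinOrder_iff_pow_eq_one]
    rintro ⟨m, hm, h⟩
    exact hq' m hm (by simpa using congrArg Units.val h)
  intro a b h
  exact injective_pow_iff_not_isOfFinOrder.mpr hu (Units.ext (by simpa using h))

theorem neg_one_pow_mul_pow_add_ne_zero (hq : q ≠ 0) (hq' : ∀ m : ℕ, 0 < m → q ^ m ≠ 1)
    (s a t b : ℕ) (hab : a ≠ b) : (-1) ^ s * q ^ a + (-1) ^ t * q ^ b ≠ 0 := by
  intro h
  have hsq : ((-1 : K) ^ s * q ^ a) ^ 2 = ((-1) ^ t * q ^ b) ^ 2 := by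
    rw [eq_neg_of_add_eq_zero_left h, neg_sq]
  have : q ^ (a * 2) = q ^ (b * 2) := by
    simpa [mul_pow, ← pow_mul, pow_mul_comm] using hsq
  exact hab (by simpa using pow_injective_of_pow_ne_one hq hq' this)

end NotRootOfUnity

variable {k : Type} [Field k]

section Columns

variable (q α β : k) (n : ℕ) (i : Fin n)

theorem Dmat_col_e : (Dmat k q α β n).col (i, 0) =
    (1 + (-1) ^ n * q ^ (i : ℕ) * α) • Pi.single (i.castSucc, 1) 1 +
      (q ^ (n - i - 1) + (-1) ^ n * β) • Pi.single (i.succ, 2) 1 := by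
  ext ⟨j, b⟩
  simp only [Dmat, col_apply, Pi.add_apply, Pi.smul_apply, Pi.single_apply, Prod.mk.injEq,
    smul_eq_mul, Fin.ext_iff, Fin.val_succ, Fin.val_castSucc]
  split_ifs <;> simp_all

theorem Dmat_col_x : (Dmat k q α β n).col (i, 1) =
    (q ^ (n - i - 1) + (-1) ^ (n + 1) * q * β) • Pi.single (i.succ, 3) 1 := by
  ext ⟨j, b⟩
  simp only [Dmat, col_apply, Pi.smul_apply, Pi.single_apply, Prod.mk.injEq,
    smul_eq_mul, Fin.ext_iff, Fin.val_succ]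
  split_ifs <;> simp_all

theorem Dmat_col_y : (Dmat k q α β n).col (i, 2) =
    (-q + (-1) ^ n * q ^ (i : ℕ) * α) • Pi.single (i.castSucc, 3) 1 := by
  ext ⟨j, b⟩
  simp only [Dmat, col_apply, Pi.smul_apply, Pi.single_apply, Prod.mk.injEq,
    smul_eq_mul, Fin.ext_iff, Fin.val_castSucc]
  split_ifs <;> simp_all

theorem Dmat_col_yx : (Dmat k q α β n).col (i, 3) = 0 := by
  ext ⟨j, b⟩
  simp only [Dmat, col_apply, Pi.zero_apply]
  split_ifs <;> simp_all

end Columns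

theorem finrank_range_dMap (q α β : k) (n : ℕ) :
    finrank k (LinearMap.range (dMap k q α β n)) = (Dmat k q α β n).rank := rfl

theorem finrank_ker_dMap_add_rank (q α β : k) (n : ℕ) :
    finrank k (LinearMap.ker (dMap k q α β n)) + (Dmat k q α β n).rank = 4 * n := by
  have h := LinearMap.finrank_range_add_finrank_ker (dMap k q α β n)
  rw [finrank_range_dMap, finrank_fintype_fun_eq_card, Fintype.card_prod, Fintype.card_fin,
    Fintype.card_fin] at h
  omega

theorem rank_Dmat_le (q α β : k) (n : ℕ) : (Dmat k q α β n).rank ≤ 2 * n + 1 := by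
  have h := (Dmat k q α β n).rank_le_card_of_col_mem_span
    (Sum.elim (fun i : Fin n => (Dmat k q α β n).col (i, 0))
      (fun j : Fin (n + 1) => Pi.single (j, 3) 1)) ?_
  · simpa [two_mul, add_assoc] using h
  rintro ⟨i, b⟩
  fin_cases b <;> simp only [Fin.zero_eta, Fin.mk_one, Fin.reduceFinMk]
  · exact subset_span ⟨.inl i, rfl⟩
  · rw [Dmat_col_x]; exact smul_mem _ _ (subset_span ⟨.inr i.succ, rfl⟩)
  · rw [Dmat_col_y]; exact smul_mem _ _ (subset_span ⟨.inr i.castSucc, rfl⟩)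
  · rw [Dmat_col_yx]; exact zero_mem _

/- Pivots of `dₙ` for `n = m + 3`: the column `eᵢ` is pivoted at `xeᵢ`, except `e₀` at `ye₁`
since `1 + (-1)ⁿ` may vanish; the row `yxⱼ` at the column `yeⱼ`, except `yx₁`, whose
`y`-coefficient `-q + (-1)ⁿq` may vanish, and `yxₙ`, which has no `yeₙ`; these two are pivoted at
`xe₀` and `xe_{n-1}` (`n ≥ 3` makes the coefficient `qⁿ⁻¹ ± q` of `xe₀` nonzero). -/
def pivotRow (m : ℕ) : Fin (m + 3) ⊕ Fin (m + 4) → Fin (m + 4) × Fin 4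
  | .inl i => if i = 0 then (i.succ, 2) else (i.castSucc, 1)
  | .inr j => (j, 3)

def pivotCol (m : ℕ) : Fin (m + 3) ⊕ Fin (m + 4) → Fin (m + 3) × Fin 4
  | .inl i => (i, 0)
  | .inr j => Fin.lastCases (Fin.last _, 1) (fun j => if j = 1 then (0, 1) else (j, 2)) j

theorem Dmat_col_pivotCol_inr (q α β : k) (m : ℕ) (j : Fin (m + 4)) :
    ∃ c : k, (Dmat k q α β (m + 3)).col (pivotCol m (.inr j)) = c • Pi.single (j, 3) 1 := by
  induction j using Fin.lastCases with
  | last =>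
    simp only [pivotCol, Fin.lastCases_last, Dmat_col_x, Fin.succ_last]
    exact ⟨_, rfl⟩
  | cast j =>
    simp only [pivotCol, Fin.lastCases_castSucc]
    split_ifs with hj
    · subst hj; exact ⟨_, Dmat_col_x q α β _ 0⟩
    · exact ⟨_, Dmat_col_y q α β _ j⟩

theorem Dmat_pivotRow_pivotCol_ne_zero {q : k} (hq : q ≠ 0)
    (hq' : ∀ m : ℕ, 0 < m → q ^ m ≠ 1) (m : ℕ) (i : Fin (m + 3) ⊕ Fin (m + 4)) :
    Dmat k q 1 1 (m + 3) (pivotRow m i) (pivotCol m i) ≠ 0 := by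
  have key := neg_one_pow_mul_pow_add_ne_zero hq hq'
  rcases i with i | j
  · by_cases hi : i = 0
    · subst hi
      simpa [pivotRow, pivotCol, Dmat] using key 0 (m + 2) (m + 3) 0 (by omega)
    · simpa [pivotRow, pivotCol, Dmat, hi] using
        key 0 0 (m + 3) i (Fin.val_ne_zero_iff.mpr hi).symm
  · induction j using Fin.lastCases with
    | last => simpa [pivotRow, pivotCol, Dmat] using key 0 0 (m + 4) 1 (by omega)
    | cast j =>
      simp only [pivotRow, pivotCol, Fin.lastCases_castSucc]
      by_cases hj : j = 1
      · subst hj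
        simpa [Dmat] using key 0 (m + 2) (m + 4) 1 (by omega)
      · simpa [Dmat, hj] using key 1 1 (m + 3) j (by simpa [Fin.ext_iff, eq_comm] using hj)

theorem Dmat_pivotRow_pivotCol_of_ne (q : k) (m : ℕ) {i j : Fin (m + 3) ⊕ Fin (m + 4)}
    (hij : i ≠ j) : Dmat k q 1 1 (m + 3) (pivotRow m i) (pivotCol m j) = 0 := by
  rw [← col_apply (Dmat k q 1 1 (m + 3))]
  rcases j with j | j
  · rw [pivotCol, Dmat_col_e]
    rcases i with i | i
    · have : i ≠ j := fun h => hij (by rw [h])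
      by_cases hi : i = 0
      · simp [pivotRow, if_pos hi, this]
      · simp [pivotRow, if_neg hi, this]
    · simp [pivotRow]
  · obtain ⟨c, hc⟩ := Dmat_col_pivotCol_inr q 1 1 m j
    rw [hc, Pi.smul_apply, Pi.single_eq_of_ne, smul_zero]
    rcases i with i | i
    · simp only [pivotRow]; split_ifs <;> simp
    · simpa [pivotRow] using hij

theorem rank_Dmat_of_three_le {q : k} (hq : q ≠ 0) (hq' : ∀ m : ℕ, 0 < m → q ^ m ≠ 1)
    {n : ℕ} (hn : 3 ≤ n) : (Dmat k q 1 1 n).rank = 2 * n + 1 := by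
  obtain ⟨m, rfl⟩ := Nat.exists_eq_add_of_le' hn
  refine le_antisymm (rank_Dmat_le q 1 1 _) ?_
  have h := (Dmat k q 1 1 (m + 3)).card_le_rank_of_pivots (pivotRow m) (pivotCol m)
    (Dmat_pivotRow_pivotCol_ne_zero hq hq' m) (fun _ _ => Dmat_pivotRow_pivotCol_of_ne q m)
  simp only [Fintype.card_sum, Fintype.card_fin] at h
  omega

theorem rank_Dmat_one {q : k} (hq : q ≠ 0) (hq' : ∀ m : ℕ, 0 < m → q ^ m ≠ 1) :
    (Dmat k q 1 1 1).rank = 2 := by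
  have key := neg_one_pow_mul_pow_add_ne_zero hq hq'
  refine le_antisymm ?_ ?_
  · have h := (Dmat k q 1 1 1).rank_le_card_of_col_mem_span
      (fun j : Fin 2 => Pi.single (j, 3) 1) ?_
    · simpa using h
    rintro ⟨i, b⟩
    obtain rfl : i = 0 := Subsingleton.elim _ _
    fin_cases b <;> simp only [Fin.zero_eta, Fin.mk_one, Fin.reduceFinMk]
    · simp [Dmat_col_e]
    · rw [Dmat_col_x]; exact smul_mem _ _ (subset_span ⟨1, rfl⟩)
    · rw [Dmat_col_y]; exact smul_mem _ _ (subset_span ⟨0, rfl⟩)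
    · rw [Dmat_col_yx]; exact zero_mem _
  · have h := (Dmat k q 1 1 1).card_le_rank_of_pivots (fun j : Fin 2 => (j, 3))
      ![(0, 2), (0, 1)] ?_ ?_
    · simpa using h
    · intro i; fin_cases i
      · simpa [Dmat] using key 1 1 1 0 (by omega)
      · simpa [Dmat] using key 0 0 0 1 (by omega)
    · intro i j hij; fin_cases i <;> fin_cases j <;> simp_all [Dmat]

theorem rank_Dmat_two {q : k} (hq : q ≠ 0) (hq' : ∀ m : ℕ, 0 < m → q ^ m ≠ 1)
    (hchar : ringChar k ≠ 2) : (Dmat k q 1 1 2).rank = 4 := by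
  have key := neg_one_pow_mul_pow_add_ne_zero hq hq'
  refine le_antisymm ?_ ?_
  · have h := (Dmat k q 1 1 2).rank_le_card_of_col_mem_span
      ![(Dmat k q 1 1 2).col (0, 0), (Dmat k q 1 1 2).col (1, 0), Pi.single (0, 3) 1,
        Pi.single (2, 3) 1] ?_
    · simpa using h
    rintro ⟨i, b⟩
    fin_cases i <;> fin_cases b <;> simp only [Fin.zero_eta, Fin.mk_one, Fin.reduceFinMk]
    · exact subset_span ⟨0, rfl⟩
    · norm_num [Dmat_col_x]
    · rw [Dmat_col_y]; exact smul_mem _ _ (subset_span ⟨2, rfl⟩)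
    · rw [Dmat_col_yx]; exact zero_mem _
    · exact subset_span ⟨1, rfl⟩
    · rw [Dmat_col_x]; exact smul_mem _ _ (subset_span ⟨3, rfl⟩)
    · simp [Dmat_col_y]
    · rw [Dmat_col_yx]; exact zero_mem _
  · have h := (Dmat k q 1 1 2).card_le_rank_of_pivots ![(0, 1), (1, 1), (0, 3), (2, 3)]
      ![(0, 0), (1, 0), (0, 2), (1, 1)] ?_ ?_
    · simpa using h
    · intro i; fin_cases i
      · simpa [Dmat, one_add_one_eq_two] using Ring.two_ne_zero hchar
      · simpa [Dmat] using key 0 0 0 1 (by omega)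
      · simpa [Dmat] using key 1 1 0 0 (by omega)
      · simpa [Dmat] using key 0 0 3 1 (by omega)
    · intro i j hij; fin_cases i <;> fin_cases j <;> simp_all [Dmat]

/-- suppose `char k ≠ 2` and `α = β = 1` (the identity automorphism,
so the complex computes the ordinary Hochschild cohomology `HH^*(Λ)`). Then with
`Dₙ = dim Ker d_{n+1} − dim Im dₙ` for `n > 0`: `D₁ = 2`, `D₂ = 1`, and `Dₙ = 0`
for `n ≥ 3`; i.e. `dim HH¹(Λ) = 2`, `dim HH²(Λ) = 1`, `HHⁿ(Λ) = 0` for `n ≥ 3`,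
giving a negative answer to Happel's question. -/
theorem stmt16 (k : Type) [Field k] (q : k) (hq : q ≠ 0)
    (hq' : ∀ m : ℕ, 0 < m → q ^ m ≠ 1)
    (hchar : ringChar k ≠ 2) :
    Module.finrank k ↥(LinearMap.ker (dMap k q 1 1 2)) =
      Module.finrank k ↥(LinearMap.range (dMap k q 1 1 1)) + 2 ∧
    Module.finrank k ↥(LinearMap.ker (dMap k q 1 1 3)) =
      Module.finrank k ↥(LinearMap.range (dMap k q 1 1 2)) + 1 ∧
    ∀ n : ℕ, 3 ≤ n →
      Module.finrank k ↥(LinearMap.ker (dMap k q 1 1 (n + 1))) =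
        Module.finrank k ↥(LinearMap.range (dMap k q 1 1 n)) := by
  simp only [finrank_range_dMap]
  have hker := finrank_ker_dMap_add_rank q 1 1
  have h1 := rank_Dmat_one hq hq'
  have h2 := rank_Dmat_two hq hq' hchar
  have h3 := rank_Dmat_of_three_le hq hq' (le_refl 3)
  refine ⟨by linarith [hker 2], by linarith [hker 3], fun n hn => ?_⟩
  linarith [hker (n + 1), rank_Dmat_of_three_le hq hq' hn,
    rank_Dmat_of_three_le hq hq' (show 3 ≤ n + 1 by omega)]
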